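/- arXiv:2401.14963 — 5 statements merged into one kernel-verified Lean document; each statement's English description precedes it below -/
import Mathlib

section
/- Let a, b ≥ 1 be natural numbers. For (x,y) with 1 ≤ x ≤ a and 1 ≤ y ≤ b, let φ(x,y) be the permutation τ_1 τ_2 ... τ_{a+b+2} of {1,...,a+b+2} (in one-line notation) uniquely determined by: τ_x = a+b+1, τ_{a+y} = a+b+2, and deleting the entries a+b+1 and a+b+2 from τ leaves the sequence 1, 2, ..., a+b in increasing order. Then for any (x,y) and (z,w) with 1 ≤ x,z ≤ a and 1 ≤ y,w ≤ b, the permutations φ(x,y) and φ(z,w) differ by a swap (i.e., one is obtained from the other by exchanging two entries in adjacent positions) if and only if |x - z| + |y - w| = 1. -/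
/-- Two sequences (of length `n`, with positions `1,...,n`) differ by a swap: there is a
position `p` such that the entries at the neighbouring positions `p` and `p+1` are exchanged,
and all other positions (within `1,...,n`) agree. -/
def DiffBySwap (n : ℕ) (f g : ℕ → ℕ) : Prop :=
  ∃ p : ℕ, 1 ≤ p ∧ p + 1 ≤ n ∧ g p = f (p + 1) ∧ g (p + 1) = f p ∧
    ∀ q ∈ Set.Icc 1 n, q ≠ p → q ≠ p + 1 → g q = f q

def phiF (a b x y p : ℕ) : ℕ :=
  if p = x then a + b + 1
  else if p = a + y then a + b + 2
  else if p < x then p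
  else if p < a + y then p - 1
  else p - 2

lemma phi_formula (a b x y : ℕ) (hx1 : 1 ≤ x) (hxa : x ≤ a) (hy1 : 1 ≤ y) (hyb : y ≤ b)
    (τ : ℕ → ℕ)
    (hbij : Set.BijOn τ (Set.Icc 1 (a + b + 2)) (Set.Icc 1 (a + b + 2)))
    (hτx : τ x = a + b + 1) (hτy : τ (a + y) = a + b + 2)
    (hmono : StrictMonoOn τ {p | p ∈ Set.Icc 1 (a + b + 2) ∧ p ≠ x ∧ p ≠ a + y}) :
    ∀ p ∈ Set.Icc 1 (a + b + 2), τ p = phiF a b x y p := by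
  intro p hp
  have hxmem : x ∈ Set.Icc 1 (a + b + 2) := by simp [Set.mem_Icc]; omega
  have hymem : a + y ∈ Set.Icc 1 (a + b + 2) := by simp [Set.mem_Icc]; omega
  by_cases hpx : p = x
  · subst hpx; rw [hτx]; simp [phiF]
  by_cases hpy : p = a + y
  · subst hpy
    have h1 : a + y ≠ x := by omega
    rw [hτy]; simp [phiF, h1]
  -- main case
  have hp1 : 1 ≤ p := hp.1
  have hp2 : p ≤ a + b + 2 := hp.2
  have hpS : p ∈ {p | p ∈ Set.Icc 1 (a + b + 2) ∧ p ≠ x ∧ p ≠ a + y} := ⟨hp, hpx, hpy⟩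
  have hτp_mem : τ p ∈ Set.Icc 1 (a + b + 2) := hbij.mapsTo hp
  have hτp1 : τ p ≠ a + b + 1 := by
    intro h
    exact hpx (hbij.injOn hp hxmem (h.trans hτx.symm))
  have hτp2 : τ p ≠ a + b + 2 := by
    intro h
    exact hpy (hbij.injOn hp hymem (h.trans hτy.symm))
  have hτp_le : τ p ≤ a + b := by
    have := hτp_mem.2; omega
  have hτp_ge : 1 ≤ τ p := hτp_mem.1
  set F := Finset.Icc 1 (a + b + 2) with hF
  have key : τ p = (F.filter (fun q => τ q ≤ τ p)).card := by
    have h1 : (F.filter (fun v => v ≤ τ p)).card = τ p := by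
      have he : F.filter (fun v => v ≤ τ p) = Finset.Icc 1 (τ p) := by
        ext v; simp only [Finset.mem_filter, Finset.mem_Icc, hF]; omega
      rw [he, Nat.card_Icc]; omega
    have h2 : (F.filter (fun q => τ q ≤ τ p)).card = (F.filter (fun v => v ≤ τ p)).card := by
      apply Finset.card_bij (fun q _ => τ q)
      · intro q hq
        simp only [Finset.mem_filter, Finset.mem_Icc, hF] at hq ⊢
        have := hbij.mapsTo (show q ∈ Set.Icc 1 (a+b+2) by simp [Set.mem_Icc]; omega)
        simp only [Set.mem_Icc] at this
        exact ⟨this, hq.2⟩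
      · intro q1 h1 q2 h2 heq
        simp only [Finset.mem_filter, Finset.mem_Icc, hF] at h1 h2
        exact hbij.injOn (by simp [Set.mem_Icc]; omega) (by simp [Set.mem_Icc]; omega) heq
      · intro v hv
        simp only [Finset.mem_filter, Finset.mem_Icc, hF] at hv
        obtain ⟨q, hq, rfl⟩ := hbij.surjOn (show v ∈ Set.Icc 1 (a+b+2) by simp [Set.mem_Icc]; omega)
        simp only [Set.mem_Icc] at hq
        exact ⟨q, by simp only [Finset.mem_filter, Finset.mem_Icc, hF]; exact ⟨⟨hq.1, hq.2⟩, hv.2⟩, rfl⟩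
    omega
  have filt_eq : F.filter (fun q => τ q ≤ τ p) = F.filter (fun q => q ≤ p ∧ q ≠ x ∧ q ≠ a + y) := by
    ext q
    simp only [Finset.mem_filter, Finset.mem_Icc, hF]
    refine and_congr_right fun hq => ?_
    constructor
    · intro h
      have hqx : q ≠ x := by rintro rfl; rw [hτx] at h; omega
      have hqy : q ≠ a + y := by rintro rfl; rw [hτy] at h; omega
      refine ⟨?_, hqx, hqy⟩
      by_contra hgt
      push_neg at hgt
      have := hmono hpS ⟨by simp [Set.mem_Icc]; omega, hqx, hqy⟩ hgt
      omega
    · rintro ⟨hqp, hqx, hqy⟩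
      rcases eq_or_lt_of_le hqp with rfl | hlt
      · exact le_refl _
      · exact le_of_lt (hmono ⟨by simp [Set.mem_Icc]; omega, hqx, hqy⟩ hpS hlt)
  rw [key, filt_eq]
  have hxy : x < a + y := by omega
  rcases Nat.lt_trichotomy p x with hc | hc | hc
  · -- p < x : card = p
    have he : F.filter (fun q => q ≤ p ∧ q ≠ x ∧ q ≠ a + y) = Finset.Icc 1 p := by
      ext q; simp only [Finset.mem_filter, Finset.mem_Icc, hF]; omega
    rw [he, Nat.card_Icc]
    simp only [phiF]; split_ifs <;> omega
  · omega
  rcases Nat.lt_trichotomy p (a + y) with hd | hd | hd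
  · -- x < p < a+y : card = p - 1
    have he : F.filter (fun q => q ≤ p ∧ q ≠ x ∧ q ≠ a + y) = (Finset.Icc 1 p).erase x := by
      ext q; simp only [Finset.mem_filter, Finset.mem_Icc, Finset.mem_erase, hF]; omega
    rw [he, Finset.card_erase_of_mem (by simp [Finset.mem_Icc]; omega), Nat.card_Icc]
    simp only [phiF]; split_ifs <;> omega
  · omega
  · -- p > a + y : card = p - 2
    have he : F.filter (fun q => q ≤ p ∧ q ≠ x ∧ q ≠ a + y) =
        ((Finset.Icc 1 p).erase x).erase (a + y) := by
      ext q; simp only [Finset.mem_filter, Finset.mem_Icc, Finset.mem_erase, hF]; omega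
    rw [he, Finset.card_erase_of_mem (by simp [Finset.mem_erase, Finset.mem_Icc]; omega),
      Finset.card_erase_of_mem (by simp [Finset.mem_Icc]; omega), Nat.card_Icc]
    simp only [phiF]; split_ifs <;> omega

lemma diffBySwap_symm {n : ℕ} {f g : ℕ → ℕ} (h : DiffBySwap n f g) : DiffBySwap n g f := by
  obtain ⟨p, h1, h2, h3, h4, h5⟩ := h
  exact ⟨p, h1, h2, h4.symm, h3.symm, fun q hq hq1 hq2 => (h5 q hq hq1 hq2).symm⟩

lemma diffBySwap_congr {n : ℕ} {f f' g g' : ℕ → ℕ}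
    (hf : ∀ q ∈ Set.Icc 1 n, f q = f' q) (hg : ∀ q ∈ Set.Icc 1 n, g q = g' q) :
    DiffBySwap n f g ↔ DiffBySwap n f' g' := by
  have key : ∀ f f' g g' : ℕ → ℕ, (∀ q ∈ Set.Icc 1 n, f q = f' q) →
      (∀ q ∈ Set.Icc 1 n, g q = g' q) → DiffBySwap n f g → DiffBySwap n f' g' := by
    intro f f' g g' hf hg ⟨p, h1, h2, h3, h4, h5⟩
    have hpm : p ∈ Set.Icc 1 n := by simp [Set.mem_Icc]; omega
    have hpm1 : p + 1 ∈ Set.Icc 1 n := by simp [Set.mem_Icc]; omega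
    exact ⟨p, h1, h2, (hg p hpm).symm.trans (h3.trans (hf _ hpm1)),
      (hg _ hpm1).symm.trans (h4.trans (hf p hpm)),
      fun q hq hq1 hq2 => (hg q hq).symm.trans ((h5 q hq hq1 hq2).trans (hf q hq))⟩
  exact ⟨key f f' g g' hf hg, key f' f g' g (fun q hq => (hf q hq).symm)
    (fun q hq => (hg q hq).symm)⟩

-- swap in x direction: swap at position x between phiF x y and phiF (x+1) y
lemma swapA (a b x y : ℕ) (hx1 : 1 ≤ x) (hxa : x + 1 ≤ a) (hy1 : 1 ≤ y) (hyb : y ≤ b) :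
    DiffBySwap (a + b + 2) (phiF a b x y) (phiF a b (x + 1) y) := by
  refine ⟨x, hx1, by omega, ?_, ?_, ?_⟩
  · simp only [phiF]; split_ifs <;> omega
  · simp only [phiF]; split_ifs <;> omega
  · intro q hq hq1 hq2
    have h1 : 1 ≤ q := hq.1
    have h2 : q ≤ a + b + 2 := hq.2
    simp only [phiF]; split_ifs <;> omega

-- swap in y direction: swap at position a+y between phiF x y and phiF x (y+1)
lemma swapB (a b x y : ℕ) (hx1 : 1 ≤ x) (hxa : x ≤ a) (hy1 : 1 ≤ y) (hyb : y + 1 ≤ b) :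
    DiffBySwap (a + b + 2) (phiF a b x y) (phiF a b x (y + 1)) := by
  refine ⟨a + y, by omega, by omega, ?_, ?_, ?_⟩
  · simp only [phiF]; split_ifs <;> omega
  · simp only [phiF]; split_ifs <;> omega
  · intro q hq hq1 hq2
    have h1 : 1 ≤ q := hq.1
    have h2 : q ≤ a + b + 2 := hq.2
    simp only [phiF]; split_ifs <;> omega

lemma phi_main (a b x y z w : ℕ)
    (ha : 1 ≤ a) (hb : 1 ≤ b)
    (hx1 : 1 ≤ x) (hxa : x ≤ a) (hy1 : 1 ≤ y) (hyb : y ≤ b)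
    (hz1 : 1 ≤ z) (hza : z ≤ a) (hw1 : 1 ≤ w) (hwb : w ≤ b) :
    DiffBySwap (a + b + 2) (phiF a b x y) (phiF a b z w) ↔
      Nat.dist x z + Nat.dist y w = 1 := by
  simp only [Nat.dist]
  constructor
  · rintro ⟨p, hp1, hp2, h3, h4, h5⟩
    -- locate value a+b+1 in g = phiF z w : it is at z; in f it is at x
    have fpos : ∀ q, 1 ≤ q → q ≤ a + b + 2 → phiF a b x y q = a + b + 1 → q = x := by
      intro q hq1 hq2 h; by_contra hne
      simp only [phiF] at h; split_ifs at h <;> omega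
    have fpos2 : ∀ q, 1 ≤ q → q ≤ a + b + 2 → phiF a b x y q = a + b + 2 → q = a + y := by
      intro q hq1 hq2 h; by_contra hne
      simp only [phiF] at h; split_ifs at h <;> omega
    have gz : phiF a b z w z = a + b + 1 := by simp [phiF]
    have gw : phiF a b z w (a + w) = a + b + 2 := by
      have : a + w ≠ z := by omega
      simp [phiF, this]
    -- determine relation between z and x
    have hzx : z = x ∨ (z = p ∧ x = p + 1) ∨ (z = p + 1 ∧ x = p) := by
      by_cases hzp : z = p
      · right; left
        have hv : phiF a b x y (p + 1) = a + b + 1 := by rw [← h3, ← hzp]; exact gz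
        exact ⟨hzp, (fpos (p + 1) (by omega) (by omega) hv).symm⟩
      by_cases hzp1 : z = p + 1
      · right; right
        have hv : phiF a b x y p = a + b + 1 := by rw [← h4, ← hzp1]; exact gz
        exact ⟨hzp1, (fpos p (by omega) (by omega) hv).symm⟩
      · left
        have hv := h5 z (by simp [Set.mem_Icc]; omega) hzp hzp1
        exact fpos z (by omega) (by omega) (hv ▸ gz)
    have hwy : a + w = a + y ∨ (a + w = p ∧ a + y = p + 1) ∨ (a + w = p + 1 ∧ a + y = p) := by
      by_cases hwp : a + w = p
      · right; left
        have hv : phiF a b x y (p + 1) = a + b + 2 := by rw [← h3, ← hwp]; exact gw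
        exact ⟨hwp, (fpos2 (p + 1) (by omega) (by omega) hv).symm⟩
      by_cases hwp1 : a + w = p + 1
      · right; right
        have hv : phiF a b x y p = a + b + 2 := by rw [← h4, ← hwp1]; exact gw
        exact ⟨hwp1, (fpos2 p (by omega) (by omega) hv).symm⟩
      · left
        have hv := h5 (a + w) (by simp [Set.mem_Icc]; omega) hwp hwp1
        exact fpos2 (a + w) (by omega) (by omega) (hv ▸ gw)
    -- if x = z and y = w then contradiction
    have hne : ¬ (x = z ∧ y = w) := by
      rintro ⟨he1, he2⟩
      rw [← he1, ← he2] at h3 h4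
      have hc : phiF a b x y p = phiF a b x y (p + 1) := by rw [← h3, ← h4]
      simp only [phiF] at hc; split_ifs at hc <;> omega
    rcases hzx with h | h | h <;> rcases hwy with h' | h' | h' <;> omega
  · intro h
    have hcases : (z = x + 1 ∧ w = y) ∨ (x = z + 1 ∧ w = y) ∨
        (z = x ∧ w = y + 1) ∨ (z = x ∧ y = w + 1) := by omega
    rcases hcases with ⟨he1, he2⟩ | ⟨he1, he2⟩ | ⟨he1, he2⟩ | ⟨he1, he2⟩
    · rw [he1, he2]; exact swapA a b x y hx1 (by omega) hy1 hyb
    · rw [he1, he2]; exact diffBySwap_symm (swapA a b z y hz1 (by omega) hy1 hyb)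
    · rw [he1, he2]; exact swapB a b x y hx1 hxa hy1 (by omega)
    · rw [he1, he2]; exact diffBySwap_symm (swapB a b x w hx1 hxa hw1 (by omega))

/-- Let `a, b ≥ 1`. For `1 ≤ x ≤ a` and `1 ≤ y ≤ b`, let `φ(x,y)` be the
permutation of `{1,...,a+b+2}` (in one-line notation, as a function from positions to values)
determined by: the value `a+b+1` is at position `x`, the value `a+b+2` is at position `a+y`,
and removing these two values leaves `1,...,a+b` in increasing order. Then `φ(x,y)` and
`φ(z,w)` differ by a swap of two adjacent entries iff `|x-z| + |y-w| = 1`. -/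
theorem phi_swap_iff_dist_one (a b x y z w : ℕ)
    (ha : 1 ≤ a) (hb : 1 ≤ b)
    (hx1 : 1 ≤ x) (hxa : x ≤ a) (hy1 : 1 ≤ y) (hyb : y ≤ b)
    (hz1 : 1 ≤ z) (hza : z ≤ a) (hw1 : 1 ≤ w) (hwb : w ≤ b)
    (τ ρ : ℕ → ℕ)
    (hτbij : Set.BijOn τ (Set.Icc 1 (a + b + 2)) (Set.Icc 1 (a + b + 2)))
    (hτx : τ x = a + b + 1) (hτy : τ (a + y) = a + b + 2)
    (hτmono : StrictMonoOn τ {p | p ∈ Set.Icc 1 (a + b + 2) ∧ p ≠ x ∧ p ≠ a + y})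
    (hρbij : Set.BijOn ρ (Set.Icc 1 (a + b + 2)) (Set.Icc 1 (a + b + 2)))
    (hρz : ρ z = a + b + 1) (hρw : ρ (a + w) = a + b + 2)
    (hρmono : StrictMonoOn ρ {p | p ∈ Set.Icc 1 (a + b + 2) ∧ p ≠ z ∧ p ≠ a + w}) :
    DiffBySwap (a + b + 2) τ ρ ↔ Nat.dist x z + Nat.dist y w = 1 := by
  have hτf := phi_formula a b x y hx1 hxa hy1 hyb τ hτbij hτx hτy hτmono
  have hρf := phi_formula a b z w hz1 hza hw1 hwb ρ hρbij hρz hρw hρmono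
  rw [diffBySwap_congr hτf hρf]
  exact phi_main a b x y z w ha hb hx1 hxa hy1 hyb hz1 hza hw1 hwb
end

section
/- For a binary string b = b_1 ... b_n of length n ≥ 1, let g(b) be the binary string of length 3n - 1 obtained by concatenating the blocks c_{2i-1} c_{2i} for i = 1,...,n, where c_{2i-1} c_{2i} = 01 if b_i = 0 and c_{2i-1} c_{2i} = 10 if b_i = 1, with a single padding symbol 1 inserted between consecutive blocks (i.e., g(b) = c_1 c_2 1 c_3 c_4 1 ... 1 c_{2n-1} c_{2n}). Then for all binary strings b, b' of length n with b ≠ b', the string g(b') is obtained from g(b) by complementing all bits in a single contiguous substring if and only if the Hamming distance between b and b' equals 1. -/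
/-- The string `g(b) = c_1 c_2 1 c_3 c_4 1 ... 1 c_{2n-1} c_{2n}` of length `3n - 1`
(positions indexed from 0): block `i` occupies positions `3i, 3i+1` and holds `01` if
`b_i = 0` and `10` if `b_i = 1`; each position `3i + 2` holds the padding bit `1`. -/
def paddedCompString {n : ℕ} (b : Fin n → Bool) : Fin (3 * n - 1) → Bool :=
  fun k =>
    if (k : ℕ) % 3 = 2 then true
    else if (k : ℕ) % 3 = 0 then b ⟨(k : ℕ) / 3, by omega⟩
    else !(b ⟨(k : ℕ) / 3, by omega⟩)

/-- `g` is obtained from `f` by complementing all bits in the contiguous range of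
positions `p, p+1, ..., q`, leaving all other positions unchanged. -/
def DiffBySubstringComplement {m : ℕ} (f g : Fin m → Bool) : Prop :=
  ∃ (p q : ℕ), p ≤ q ∧ q < m ∧
    ∀ r : Fin m, g r = if p ≤ (r : ℕ) ∧ (r : ℕ) ≤ q then !(f r) else f r

lemma hd_one {n : ℕ} (b b' : Fin n → Bool) :
    hammingDist b b' = 1 ↔ ∃ i, b i ≠ b' i ∧ ∀ j, j ≠ i → b j = b' j := by
  rw [hammingDist, Finset.card_eq_one]
  constructor
  · rintro ⟨a, ha⟩
    refine ⟨a, ?_, ?_⟩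
    · have : a ∈ ({a} : Finset (Fin n)) := Finset.mem_singleton_self a
      rw [← ha] at this
      simpa using this
    · intro j hj
      by_contra hne
      have : j ∈ ({a} : Finset (Fin n)) := by
        rw [← ha]; simp [hne]
      simp at this; exact hj this
  · rintro ⟨i, hi, hother⟩
    refine ⟨i, ?_⟩
    ext j
    simp only [Finset.mem_filter, Finset.mem_univ, true_and, Finset.mem_singleton]
    constructor
    · intro hj
      by_contra hne
      exact hj (hother j hne)
    · rintro rfl; exact hi

/-- For binary strings `b ≠ b'` of length `n ≥ 1`, the string `g(b')` is
obtained from `g(b)` by complementing a single contiguous substring iff the Hamming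
distance between `b` and `b'` equals 1. -/
theorem paddedCompString_complement_iff (n : ℕ) (hn : 1 ≤ n)
    (b b' : Fin n → Bool) (hbb' : b ≠ b') :
    DiffBySubstringComplement (paddedCompString b) (paddedCompString b') ↔
      hammingDist b b' = 1 := by
  rw [hd_one]
  constructor
  · rintro ⟨p, q, hpq, hqm, h⟩
    have hpad : ∀ k (hk1 : p ≤ k) (hk2 : k ≤ q), k % 3 ≠ 2 := by
      intro k hk1 hk2 hk3
      have hk : k < 3 * n - 1 := lt_of_le_of_lt hk2 hqm
      have := h ⟨k, hk⟩
      simp [paddedCompString, hk1, hk2, hk3] at this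
    have hq2 : q ≤ p + 1 := by
      by_contra hc
      push_neg at hc
      have h0 := hpad p le_rfl hpq
      have h1 := hpad (p+1) (by omega) (by omega)
      have h2 := hpad (p+2) (by omega) (by omega)
      omega
    have h0 := hpad p le_rfl hpq
    rcases eq_or_lt_of_le hpq with hqp | hqp
    · -- q = p : contradiction
      exfalso
      subst hqp
      rcases (by omega : p % 3 = 0 ∨ p % 3 = 1 ∨ p % 3 = 2) with hp | hp | hp
      · -- p % 3 = 0, use positions p and p+1
        have hpn : p + 1 < 3 * n - 1 := by omega
        have ha := h ⟨p, by omega⟩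
        have hb2 := h ⟨p+1, hpn⟩
        simp only [paddedCompString, Fin.val_mk] at ha hb2
        simp only [hp] at ha
        simp only [(by omega : (p+1) % 3 = 1), (by omega : (p+1)/3 = p/3)] at hb2
        simp only [if_pos (show p ≤ p ∧ p ≤ p from ⟨le_rfl, le_rfl⟩)] at ha
        simp only [if_neg (by omega : ¬ (p ≤ p + 1 ∧ p + 1 ≤ p))] at hb2
        norm_num at ha hb2
        rw [ha] at hb2
        simp at hb2
      · have hp1 : 1 ≤ p := by omega
        have ha := h ⟨p, by omega⟩
        have hb2 := h ⟨p-1, by omega⟩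
        simp only [paddedCompString, Fin.val_mk] at ha hb2
        simp only [hp] at ha
        simp only [(by omega : (p-1) % 3 = 0), (by omega : (p-1)/3 = p/3)] at hb2
        simp only [if_pos (show p ≤ p ∧ p ≤ p from ⟨le_rfl, le_rfl⟩)] at ha
        simp only [if_neg (by omega : ¬ (p ≤ p - 1 ∧ p - 1 ≤ p))] at hb2
        norm_num at ha hb2
        rw [hb2] at ha
        simp at ha
      · exact h0 hp
    · -- q = p + 1
      have hq : q = p + 1 := by omega
      subst hq
      have h1 := hpad (p+1) (by omega) le_rfl
      have hp0 : p % 3 = 0 := by omega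
      have hpn : p / 3 < n := by omega
      refine ⟨⟨p/3, hpn⟩, ?_, ?_⟩
      · have ha := h ⟨p, by omega⟩
        simp [paddedCompString, hp0, (by omega : ¬ p % 3 = 2), le_rfl] at ha
        rw [ha]; simp
      · intro j hj
        have h3j : 3 * (j : ℕ) < 3 * n - 1 := by omega
        have ha := h ⟨3 * (j : ℕ), h3j⟩
        have hjne : (j : ℕ) ≠ p / 3 := by
          intro hc; apply hj; exact Fin.ext hc
        have hrange : ¬ (p ≤ 3 * (j : ℕ) ∧ 3 * (j : ℕ) ≤ p + 1) := by omega
        simp [paddedCompString, (by omega : 3 * (j:ℕ) % 3 = 0), hrange,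
          (by omega : 3 * (j:ℕ) / 3 = (j:ℕ))] at ha
        rw [ha]
  · rintro ⟨i, hi, hother⟩
    refine ⟨3 * (i : ℕ), 3 * (i : ℕ) + 1, by omega, by omega, ?_⟩
    intro r
    have hib : b' i = !(b i) := by
      cases hb : b i <;> cases hb' : b' i <;> simp_all
    rcases (by omega : (r:ℕ) % 3 = 0 ∨ (r:ℕ) % 3 = 1 ∨ (r:ℕ) % 3 = 2) with hr | hr | hr
    · by_cases hji : (r : ℕ) / 3 = (i : ℕ)
      · have : (r : ℕ) = 3 * (i : ℕ) := by omega
        simp [paddedCompString, hr, this, hib,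
          Fin.ext_iff, (by omega : 3 * (i:ℕ) / 3 = (i:ℕ))]
      · have hrange : ¬ (3 * (i:ℕ) ≤ (r:ℕ) ∧ (r:ℕ) ≤ 3 * (i:ℕ) + 1) := by omega
        have := hother ⟨(r:ℕ)/3, by omega⟩ (by simp [Fin.ext_iff, hji])
        simp [paddedCompString, hr, hrange, this]
    · by_cases hji : (r : ℕ) / 3 = (i : ℕ)
      · have : (r : ℕ) = 3 * (i : ℕ) + 1 := by omega
        simp [paddedCompString, hr, this, hib, (by omega : (3*(i:ℕ)+1) % 3 = 1),
          (by omega : (3*(i:ℕ)+1) / 3 = (i:ℕ))]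
      · have hrange : ¬ (3 * (i:ℕ) ≤ (r:ℕ) ∧ (r:ℕ) ≤ 3 * (i:ℕ) + 1) := by omega
        have := hother ⟨(r:ℕ)/3, by omega⟩ (by simp [Fin.ext_iff, hji])
        simp [paddedCompString, hr, hrange, this]
    · have hrange : ¬ (3 * (i:ℕ) ≤ (r:ℕ) ∧ (r:ℕ) ≤ 3 * (i:ℕ) + 1) := by omega
      simp [paddedCompString, hr, hrange]
end

section
/- For a binary string b = b_1 ... b_n of length n ≥ 1, let h(b) be the binary string of length 4n - 2 obtained by concatenating the blocks c_{2i-1} c_{2i} for i = 1,...,n, where c_{2i-1} c_{2i} = 01 if b_i = 0 and c_{2i-1} c_{2i} = 10 if b_i = 1, with the two padding symbols 01 inserted between consecutive blocks (i.e., h(b) = c_1 c_2 01 c_3 c_4 01 ... 01 c_{2n-1} c_{2n}). Then for all binary strings b, b' of length n with b ≠ b', the string h(b') is obtained from h(b) by reversing a single contiguous substring if and only if the Hamming distance between b and b' equals 1. -/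
/-- The string `h(b) = c_1 c_2 01 c_3 c_4 01 ... 01 c_{2n-1} c_{2n}` of length `4n - 2`
(positions indexed from 0): block `i` occupies positions `4i, 4i+1` and holds `01` if
`b_i = 0` and `10` if `b_i = 1`; positions `4i+2, 4i+3` hold the padding `01`. -/
def paddedRevString {n : ℕ} (b : Fin n → Bool) : Fin (4 * n - 2) → Bool :=
  fun k =>
    if (k : ℕ) % 4 = 2 then false
    else if (k : ℕ) % 4 = 3 then true
    else if (k : ℕ) % 4 = 0 then b ⟨(k : ℕ) / 4, by omega⟩
    else !(b ⟨(k : ℕ) / 4, by omega⟩)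

/-- `g` is obtained from `f` by reversing the contiguous segment of entries at positions
`p, p+1, ..., q`, leaving all other positions unchanged. -/
def DiffBySubstringReversal {m : ℕ} (f g : Fin m → Bool) : Prop :=
  ∃ (p q : ℕ) (_ : p ≤ q) (hq : q < m),
    ∀ r : Fin m, g r =
      if hr : p ≤ (r : ℕ) ∧ (r : ℕ) ≤ q then f ⟨p + q - (r : ℕ), by omega⟩ else f r

lemma psr_pad2 {n : ℕ} (b : Fin n → Bool) (k : Fin (4*n-2)) (h : (k:ℕ) % 4 = 2) :
    paddedRevString b k = false := by simp [paddedRevString, h]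

lemma psr_pad3 {n : ℕ} (b : Fin n → Bool) (k : Fin (4*n-2)) (h : (k:ℕ) % 4 = 3) :
    paddedRevString b k = true := by simp [paddedRevString, h]

lemma psr_blk0 {n : ℕ} (b : Fin n → Bool) (k : Fin (4*n-2)) (j : Fin n)
    (h : (k:ℕ) = 4*(j:ℕ)) : paddedRevString b k = b j := by
  have h4 : (k:ℕ) % 4 = 0 := by omega
  have hd : (k:ℕ) / 4 = (j:ℕ) := by omega
  simp only [paddedRevString, h4]
  norm_num
  congr 1
  exact Fin.ext hd

lemma psr_blk1 {n : ℕ} (b : Fin n → Bool) (k : Fin (4*n-2)) (j : Fin n)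
    (h : (k:ℕ) = 4*(j:ℕ)+1) : paddedRevString b k = !b j := by
  have h4 : (k:ℕ) % 4 = 1 := by omega
  have hd : (k:ℕ) / 4 = (j:ℕ) := by omega
  simp only [paddedRevString, h4]
  norm_num
  congr 1
  exact Fin.ext hd

/-- For binary strings `b ≠ b'` of length `n ≥ 1`, the string `h(b')` is
obtained from `h(b)` by reversing a single contiguous substring iff the Hamming distance
between `b` and `b'` equals 1. -/
theorem paddedRevString_reversal_iff (n : ℕ) (hn : 1 ≤ n)
    (b b' : Fin n → Bool) (hbb' : b ≠ b') :
    DiffBySubstringReversal (paddedRevString b) (paddedRevString b') ↔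
      hammingDist b b' = 1 := by
  constructor
  · rintro ⟨p, q, hpq, hqlt, hrev⟩
    have hrev' : ∀ (x : ℕ) (hx : x < 4*n-2),
        paddedRevString b' ⟨x, hx⟩ =
          if h : p ≤ x ∧ x ≤ q then paddedRevString b ⟨p+q-x, by omega⟩
          else paddedRevString b ⟨x, hx⟩ := fun x hx => hrev ⟨x, hx⟩
    have hdiff : ∀ j : Fin n, b j ≠ b' j → p ≤ 4*(j:ℕ) ∧ 4*(j:ℕ)+1 ≤ q := by
      intro j hj
      have hjn : (j:ℕ) < n := j.isLt
      have h0 : 4*(j:ℕ) < 4*n-2 := by omega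
      have h1 : 4*(j:ℕ)+1 < 4*n-2 := by omega
      have e0 := hrev' (4*(j:ℕ)) h0
      have e1 := hrev' (4*(j:ℕ)+1) h1
      have c0 : p ≤ 4*(j:ℕ) ∧ 4*(j:ℕ) ≤ q := by
        by_contra hc
        rw [dif_neg hc, psr_blk0 b ⟨4*(j:ℕ), h0⟩ j rfl,
          psr_blk0 b' ⟨4*(j:ℕ), h0⟩ j rfl] at e0
        exact hj e0.symm
      have c1 : p ≤ 4*(j:ℕ)+1 ∧ 4*(j:ℕ)+1 ≤ q := by
        by_contra hc
        rw [dif_neg hc, psr_blk1 b ⟨4*(j:ℕ)+1, h1⟩ j rfl,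
          psr_blk1 b' ⟨4*(j:ℕ)+1, h1⟩ j rfl] at e1
        simp only [Bool.not_inj_iff] at e1
        exact hj e1.symm
      exact ⟨c0.1, c1.2⟩
    have hkey : ∀ j : Fin n, b j ≠ b' j → p = 4*(j:ℕ) ∧ q = 4*(j:ℕ)+1 := by
      intro j hj
      obtain ⟨hp, hq1⟩ := hdiff j hj
      have hjn : (j:ℕ) < n := j.isLt
      have h0 : 4*(j:ℕ) < 4*n-2 := by omega
      have h1 : 4*(j:ℕ)+1 < 4*n-2 := by omega
      have hb0 : p + q - 4*(j:ℕ) < 4*n-2 := by omega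
      have hb1 : p + q - (4*(j:ℕ)+1) < 4*n-2 := by omega
      have e0 := hrev' (4*(j:ℕ)) h0
      have e1 := hrev' (4*(j:ℕ)+1) h1
      have e2 := hrev' (p+q-4*(j:ℕ)) hb0
      have e3 := hrev' (p+q-(4*(j:ℕ)+1)) hb1
      rw [dif_pos ⟨hp, by omega⟩, psr_blk0 b' ⟨4*(j:ℕ), h0⟩ j rfl] at e0
      rw [dif_pos ⟨by omega, hq1⟩, psr_blk1 b' ⟨4*(j:ℕ)+1, h1⟩ j rfl] at e1
      rw [dif_pos ⟨by omega, by omega⟩,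
        psr_blk0 b ⟨p+q-(p+q-4*(j:ℕ)), by omega⟩ j (show p+q-(p+q-4*(j:ℕ)) = 4*(j:ℕ) by omega)] at e2
      rw [dif_pos ⟨by omega, by omega⟩,
        psr_blk1 b ⟨p+q-(p+q-(4*(j:ℕ)+1)), by omega⟩ j (show p+q-(p+q-(4*(j:ℕ)+1)) = 4*(j:ℕ)+1 by omega)] at e3
      -- e0 : b' j = psr b ⟨p+q-4j⟩
      -- e1 : !b' j = psr b ⟨p+q-(4j+1)⟩
      -- e2 : psr b' ⟨p+q-4j⟩ = b j
      -- e3 : psr b' ⟨p+q-(4j+1)⟩ = !b j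
      have h4 : (p+q)%4 = 0 ∨ (p+q)%4 = 1 ∨ (p+q)%4 = 2 ∨ (p+q)%4 = 3 := by omega
      rcases h4 with h4 | h4 | h4 | h4
      · exfalso
        rw [psr_pad3 b ⟨p+q-(4*(j:ℕ)+1), by omega⟩
          (show (p+q-(4*(j:ℕ)+1)) % 4 = 3 by omega)] at e1
        rw [psr_pad3 b' ⟨p+q-(4*(j:ℕ)+1), hb1⟩
          (show (p+q-(4*(j:ℕ)+1)) % 4 = 3 by omega)] at e3
        have hb'j : b' j = false := by simpa using e1
        have hbj : b j = false := by simpa using e3.symm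
        exact hj (by rw [hbj, hb'j])
      · constructor
        · by_contra hne
          have hplt : p < 4*(j:ℕ) := lt_of_le_of_ne hp hne
          have hx : 4*(j:ℕ)-1 < 4*n-2 := by omega
          have e4 := hrev' (4*(j:ℕ)-1) hx
          rw [dif_pos ⟨by omega, by omega⟩,
            psr_pad3 b' ⟨4*(j:ℕ)-1, hx⟩ (show (4*(j:ℕ)-1) % 4 = 3 by omega),
            psr_pad2 b ⟨p+q-(4*(j:ℕ)-1), by omega⟩
              (show (p+q-(4*(j:ℕ)-1)) % 4 = 2 by omega)] at e4
          exact absurd e4 (by simp)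
        · by_contra hne
          have hqgt : 4*(j:ℕ)+1 < q := lt_of_le_of_ne hq1 (Ne.symm hne)
          have hx : 4*(j:ℕ)+2 < 4*n-2 := by omega
          have e4 := hrev' (4*(j:ℕ)+2) hx
          rw [dif_pos ⟨by omega, by omega⟩,
            psr_pad2 b' ⟨4*(j:ℕ)+2, hx⟩ (show (4*(j:ℕ)+2) % 4 = 2 by omega),
            psr_pad3 b ⟨p+q-(4*(j:ℕ)+2), by omega⟩
              (show (p+q-(4*(j:ℕ)+2)) % 4 = 3 by omega)] at e4
          exact absurd e4 (by simp)
      · exfalso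
        rw [psr_pad2 b ⟨p+q-4*(j:ℕ), by omega⟩
          (show (p+q-4*(j:ℕ)) % 4 = 2 by omega)] at e0
        rw [psr_pad2 b' ⟨p+q-4*(j:ℕ), hb0⟩
          (show (p+q-4*(j:ℕ)) % 4 = 2 by omega)] at e2
        exact hj (by rw [← e2, e0])
      · exfalso
        rw [psr_pad3 b ⟨p+q-4*(j:ℕ), by omega⟩
          (show (p+q-4*(j:ℕ)) % 4 = 3 by omega)] at e0
        rw [psr_pad3 b' ⟨p+q-4*(j:ℕ), hb0⟩
          (show (p+q-4*(j:ℕ)) % 4 = 3 by omega)] at e2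
        exact hj (by rw [← e2, e0])
    obtain ⟨i, hi⟩ := Function.ne_iff.mp hbb'
    obtain ⟨hpi, hqi⟩ := hkey i hi
    have : (Finset.univ.filter fun j => b j ≠ b' j) = {i} := by
      ext j
      simp only [Finset.mem_filter, Finset.mem_univ, true_and, Finset.mem_singleton]
      constructor
      · intro hj
        obtain ⟨hpj, _⟩ := hkey j hj
        exact Fin.ext (by omega)
      · rintro rfl; exact hi
    simp only [hammingDist, this, Finset.card_singleton]
  · intro hd
    have hd' : (Finset.univ.filter fun j => b j ≠ b' j).card = 1 := hd
    obtain ⟨i, hset⟩ := Finset.card_eq_one.mp hd'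
    have hi : b i ≠ b' i := by
      have : i ∈ ({i} : Finset (Fin n)) := Finset.mem_singleton_self i
      rw [← hset] at this
      simpa using this
    have huniq : ∀ j, b j ≠ b' j → j = i := by
      intro j hj
      have : j ∈ Finset.univ.filter fun k => b k ≠ b' k := by simp [hj]
      rw [hset] at this
      simpa using this
    have hin : (i:ℕ) < n := i.isLt
    refine ⟨4*(i:ℕ), 4*(i:ℕ)+1, by omega, by omega, ?_⟩
    intro r
    have hrlt := r.isLt
    by_cases hr : 4*(i:ℕ) ≤ (r:ℕ) ∧ (r:ℕ) ≤ 4*(i:ℕ)+1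
    · rw [dif_pos hr]
      rcases (by omega : (r:ℕ) = 4*(i:ℕ) ∨ (r:ℕ) = 4*(i:ℕ)+1) with h | h
      · rw [psr_blk0 b' r i h,
          psr_blk1 b ⟨4*(i:ℕ)+(4*(i:ℕ)+1)-(r:ℕ), by omega⟩ i
            (show 4*(i:ℕ)+(4*(i:ℕ)+1)-(r:ℕ) = 4*(i:ℕ)+1 by omega)]
        cases hbi : b i <;> cases hbi' : b' i <;> simp_all
      · rw [psr_blk1 b' r i h,
          psr_blk0 b ⟨4*(i:ℕ)+(4*(i:ℕ)+1)-(r:ℕ), by omega⟩ i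
            (show 4*(i:ℕ)+(4*(i:ℕ)+1)-(r:ℕ) = 4*(i:ℕ) by omega)]
        cases hbi : b i <;> cases hbi' : b' i <;> simp_all
    · rw [dif_neg hr]
      rcases (by omega : (r:ℕ)%4 = 0 ∨ (r:ℕ)%4 = 1 ∨ (r:ℕ)%4 = 2 ∨ (r:ℕ)%4 = 3)
        with h4 | h4 | h4 | h4
      · have hjlt : (r:ℕ)/4 < n := by omega
        have hval : (r:ℕ) = 4*(((⟨(r:ℕ)/4, hjlt⟩ : Fin n)):ℕ) :=
          (show (r:ℕ) = 4*((r:ℕ)/4) by omega)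
        rw [psr_blk0 b' r ⟨(r:ℕ)/4, hjlt⟩ hval, psr_blk0 b r ⟨(r:ℕ)/4, hjlt⟩ hval]
        by_contra hne
        have hji := huniq _ (fun hcc => hne hcc.symm)
        have h5 : (r:ℕ)/4 = (i:ℕ) := congrArg Fin.val hji
        omega
      · have hjlt : (r:ℕ)/4 < n := by omega
        have hval : (r:ℕ) = 4*(((⟨(r:ℕ)/4, hjlt⟩ : Fin n)):ℕ) + 1 :=
          (show (r:ℕ) = 4*((r:ℕ)/4) + 1 by omega)
        rw [psr_blk1 b' r ⟨(r:ℕ)/4, hjlt⟩ hval, psr_blk1 b r ⟨(r:ℕ)/4, hjlt⟩ hval]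
        by_contra hne
        simp only [Bool.not_inj_iff] at hne
        have hji := huniq _ (fun hcc => hne hcc.symm)
        have h5 : (r:ℕ)/4 = (i:ℕ) := congrArg Fin.val hji
        omega
      · rw [psr_pad2 b' r h4, psr_pad2 b r h4]
      · rw [psr_pad3 b' r h4, psr_pad3 b r h4]
end

section
/- For a binary string b = b_1 ... b_n of length n, let f(b) be the sequence p_1 p_2 ... p_{2n} where the pair p_{2i-1} p_{2i} equals (2i-1)(2i) if b_i = 0 and equals (2i)(2i-1) if b_i = 1; note f(b) is a permutation of {1,...,2n} in one-line notation. Then for all binary strings b, b' of length n with b ≠ b', f(b') is obtained from f(b) by cyclically rotating a single contiguous substring by one position (to the left or to the right) if and only if the Hamming distance between b and b' equals 1. -/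
/-- The permutation `f(b) = p_1 ... p_{2n}` of `{1,...,2n}` in one-line notation (as a
function from positions, indexed from 0, to values): the `i`-th pair of positions holds the
values `(2i-1)(2i)` if `b_i = 0` and `(2i)(2i-1)` if `b_i = 1` (1-indexed values). -/
def pairPerm {n : ℕ} (b : Fin n → Bool) : Fin (2 * n) → ℕ :=
  fun k =>
    if b ⟨(k : ℕ) / 2, by omega⟩ = false then (k : ℕ) + 1
    else if (k : ℕ) % 2 = 0 then (k : ℕ) + 2 else (k : ℕ)

/-- `g` is obtained from `f` by cyclically rotating the contiguous segment of entries at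
positions `p, ..., q` (with `p < q`, so the segment has length ≥ 2) one position to the
left: `q_1 q_2 ... q_k` becomes `q_2 ... q_k q_1`. -/
def RotatedLeft {m : ℕ} (f g : Fin m → ℕ) : Prop :=
  ∃ (p q : ℕ) (hpq : p < q) (hq : q < m),
    (∀ (r : Fin m) (_ : p ≤ (r : ℕ)) (h2 : (r : ℕ) < q), g r = f ⟨(r : ℕ) + 1, by omega⟩) ∧
    g ⟨q, hq⟩ = f ⟨p, by omega⟩ ∧
    (∀ r : Fin m, (r : ℕ) < p ∨ q < (r : ℕ) → g r = f r)

/-- `g` is obtained from `f` by cyclically rotating the contiguous segment of entries at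
positions `p, ..., q` (with `p < q`) one position to the right: `q_1 ... q_{k-1} q_k`
becomes `q_k q_1 ... q_{k-1}`. -/
def RotatedRight {m : ℕ} (f g : Fin m → ℕ) : Prop :=
  ∃ (p q : ℕ) (hpq : p < q) (hq : q < m),
    (∀ (r : Fin m) (_ : p < (r : ℕ)) (h2 : (r : ℕ) ≤ q), g r = f ⟨(r : ℕ) - 1, by omega⟩) ∧
    g ⟨p, by omega⟩ = f ⟨q, hq⟩ ∧
    (∀ r : Fin m, (r : ℕ) < p ∨ q < (r : ℕ) → g r = f r)

def pv (x : Bool) (k : ℕ) : ℕ :=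
  if x = false then k + 1 else if k % 2 = 0 then k + 2 else k

lemma pv_shift_iff (x y : Bool) (k : ℕ) :
    pv y k = pv x (k + 1) ↔ (k % 2 = 0 ∧ x ≠ y) := by
  rcases Nat.mod_two_eq_zero_or_one k with h | h <;>
    cases x <;> cases y <;>
      simp [pv, h, Nat.add_mod] <;> omega

lemma pv_shift'_iff (x y : Bool) (k : ℕ) :
    pv y (k + 1) = pv x k ↔ (k % 2 = 0 ∧ x ≠ y) := by
  rcases Nat.mod_two_eq_zero_or_one k with h | h <;>
    cases x <;> cases y <;>
      simp [pv, h, Nat.add_mod] <;> omega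

lemma pv_eq_iff (x y : Bool) (k : ℕ) :
    pv x k = pv y k ↔ x = y := by
  rcases Nat.mod_two_eq_zero_or_one k with h | h <;>
    cases x <;> cases y <;>
      simp [pv, h] <;> omega

lemma pairPerm_eq_iff {n : ℕ} (b b' : Fin n → Bool) (r : Fin (2 * n)) :
    pairPerm b' r = pairPerm b r ↔
      b ⟨(r : ℕ) / 2, by omega⟩ = b' ⟨(r : ℕ) / 2, by omega⟩ := by
  show pv (b' ⟨(r : ℕ) / 2, by omega⟩) (r : ℕ) = pv (b ⟨(r : ℕ) / 2, by omega⟩) (r : ℕ) ↔ _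
  rw [pv_eq_iff]
  exact eq_comm

-- forward: a left-shift equality at position r forces r even and the bits to differ
lemma shiftL {n : ℕ} (b b' : Fin n → Bool) (r : Fin (2 * n)) (hk : (r : ℕ) + 1 < 2 * n)
    (he : pairPerm b' r = pairPerm b ⟨(r : ℕ) + 1, hk⟩) :
    (r : ℕ) % 2 = 0 ∧ b ⟨(r : ℕ) / 2, by omega⟩ ≠ b' ⟨(r : ℕ) / 2, by omega⟩ := by
  have he' : pv (b' ⟨(r : ℕ) / 2, by omega⟩) (r : ℕ)
      = pv (b ⟨((r : ℕ) + 1) / 2, by omega⟩) ((r : ℕ) + 1) := he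
  have h0 := (pv_shift_iff _ _ _).mp he'
  refine ⟨h0.1, ?_⟩
  have hkk : ((r : ℕ) + 1) / 2 = (r : ℕ) / 2 := by have := h0.1; omega
  have hidx : (⟨((r : ℕ) + 1) / 2, by omega⟩ : Fin n) = ⟨(r : ℕ) / 2, by omega⟩ :=
    Fin.ext hkk
  have h2 := h0.2
  rw [hidx] at h2
  exact h2

lemma shiftR {n : ℕ} (b b' : Fin n → Bool) (k : ℕ) (hk : k + 1 < 2 * n)
    (he : pairPerm b' ⟨k + 1, hk⟩ = pairPerm b ⟨k, by omega⟩) :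
    k % 2 = 0 ∧ b ⟨k / 2, by omega⟩ ≠ b' ⟨k / 2, by omega⟩ := by
  have he' : pv (b' ⟨(k + 1) / 2, by omega⟩) (k + 1)
      = pv (b ⟨k / 2, by omega⟩) k := he
  have h0 := (pv_shift'_iff _ _ _).mp he'
  refine ⟨h0.1, ?_⟩
  have hkk : (k + 1) / 2 = k / 2 := by have := h0.1; omega
  have hidx : (⟨(k + 1) / 2, by omega⟩ : Fin n) = ⟨k / 2, by omega⟩ := Fin.ext hkk
  have h2 := h0.2
  rw [hidx] at h2
  exact h2

-- converse constructions
lemma swapL {n : ℕ} (b b' : Fin n → Bool) (r : Fin (2 * n)) (hk : (r : ℕ) + 1 < 2 * n)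
    (hke : (r : ℕ) % 2 = 0)
    (hbd : b ⟨(r : ℕ) / 2, by omega⟩ ≠ b' ⟨(r : ℕ) / 2, by omega⟩) :
    pairPerm b' r = pairPerm b ⟨(r : ℕ) + 1, hk⟩ := by
  show pv (b' ⟨(r : ℕ) / 2, by omega⟩) (r : ℕ)
      = pv (b ⟨((r : ℕ) + 1) / 2, by omega⟩) ((r : ℕ) + 1)
  rw [pv_shift_iff]
  refine ⟨hke, ?_⟩
  have hkk : ((r : ℕ) + 1) / 2 = (r : ℕ) / 2 := by omega
  have hidx : (⟨((r : ℕ) + 1) / 2, by omega⟩ : Fin n) = ⟨(r : ℕ) / 2, by omega⟩ :=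
    Fin.ext hkk
  rw [hidx]
  exact hbd

lemma swapR {n : ℕ} (b b' : Fin n → Bool) (k : ℕ) (hk : k + 1 < 2 * n)
    (hke : k % 2 = 0)
    (hbd : b ⟨k / 2, by omega⟩ ≠ b' ⟨k / 2, by omega⟩) :
    pairPerm b' ⟨k + 1, hk⟩ = pairPerm b ⟨k, by omega⟩ := by
  show pv (b' ⟨(k + 1) / 2, by omega⟩) (k + 1) = pv (b ⟨k / 2, by omega⟩) k
  rw [pv_shift'_iff]
  refine ⟨hke, ?_⟩
  have hkk : (k + 1) / 2 = k / 2 := by omega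
  have hidx : (⟨(k + 1) / 2, by omega⟩ : Fin n) = ⟨k / 2, by omega⟩ := Fin.ext hkk
  rw [hidx]
  exact hbd

lemma ham_one {n : ℕ} (b b' : Fin n → Bool) (p : ℕ) (hp : p + 1 < 2 * n)
    (hpe : p % 2 = 0)
    (hbd : b ⟨p / 2, by omega⟩ ≠ b' ⟨p / 2, by omega⟩)
    (h3 : ∀ r : Fin (2 * n), (r : ℕ) < p ∨ p + 1 < (r : ℕ) → pairPerm b' r = pairPerm b r) :
    hammingDist b b' = 1 := by
  have hpn : p / 2 < n := by omega
  have key : (Finset.univ.filter fun i => b i ≠ b' i) = {(⟨p / 2, hpn⟩ : Fin n)} := by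
    ext j
    simp only [Finset.mem_filter, Finset.mem_univ, true_and, Finset.mem_singleton]
    constructor
    · intro hj
      by_contra hjne
      have hjv : (j : ℕ) ≠ p / 2 := fun h => hjne (Fin.ext h)
      have h2j : 2 * (j : ℕ) + 1 < 2 * n := by have := j.isLt; omega
      have hout : 2 * (j : ℕ) < p ∨ p + 1 < 2 * (j : ℕ) := by omega
      have e1 := h3 ⟨2 * (j : ℕ), by omega⟩ hout
      have e2 := (pairPerm_eq_iff b b' ⟨2 * (j : ℕ), by omega⟩).mp e1
      have hidx : (⟨(2 * (j : ℕ)) / 2, by omega⟩ : Fin n) = j :=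
        Fin.ext (show (2 * (j : ℕ)) / 2 = (j : ℕ) by omega)
      rw [hidx] at e2
      exact hj e2
    · intro hj
      subst hj
      exact hbd
  exact Finset.card_eq_one.mpr ⟨_, key⟩

/-- For binary strings `b ≠ b'` of length `n`, the permutation `f(b')` is
obtained from `f(b)` by cyclically rotating a single contiguous substring by one position
(to the left or to the right) iff the Hamming distance between `b` and `b'` equals 1. -/
theorem pairPerm_rotation_iff (n : ℕ) (b b' : Fin n → Bool) (hbb' : b ≠ b') :
    (RotatedLeft (pairPerm b) (pairPerm b') ∨ RotatedRight (pairPerm b) (pairPerm b')) ↔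
      hammingDist b b' = 1 := by

  constructor
  · rintro (⟨p, q, hpq, hq, h1, h2, h3⟩ | ⟨p, q, hpq, hq, h1, h2, h3⟩)
    · -- left rotation
      have hp1 : p + 1 < 2 * n := by omega
      have hpn : p / 2 < n := by omega
      have hA := shiftL b b' ⟨p, by omega⟩ hp1
        (h1 ⟨p, by omega⟩ le_rfl hpq)
      have hpe : p % 2 = 0 := hA.1
      have hbd : b ⟨p / 2, hpn⟩ ≠ b' ⟨p / 2, hpn⟩ := hA.2
      have hq1 : q = p + 1 := by
        by_contra hne
        have hlt : p + 1 < q := by omega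
        have hB := shiftL b b' ⟨p + 1, by omega⟩ (show p + 1 + 1 < 2 * n by omega)
          (h1 ⟨p + 1, by omega⟩ (Nat.le_succ p) hlt)
        have : (p + 1) % 2 = 0 := hB.1
        omega
      subst hq1
      exact ham_one b b' p (by omega) hpe hbd h3
    · -- right rotation
      have hp1 : p + 1 < 2 * n := by omega
      have hpn : p / 2 < n := by omega
      have hA := shiftR b b' p hp1
        (h1 ⟨p + 1, by omega⟩ (Nat.lt_succ_self p) hpq)
      have hpe : p % 2 = 0 := hA.1
      have hbd : b ⟨p / 2, hpn⟩ ≠ b' ⟨p / 2, hpn⟩ := hA.2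
      have hq1 : q = p + 1 := by
        by_contra hne
        have hlt : p + 2 ≤ q := by omega
        have hB := shiftR b b' (p + 1) (by omega)
          (h1 ⟨p + 2, by omega⟩ (show p < p + 2 by omega) hlt)
        have : (p + 1) % 2 = 0 := hB.1
        omega
      subst hq1
      exact ham_one b b' p (by omega) hpe hbd h3
  · intro hd
    obtain ⟨i, hi⟩ := Finset.card_eq_one.mp hd
    have hmem : i ∈ Finset.univ.filter fun j => b j ≠ b' j := by
      rw [hi]; exact Finset.mem_singleton_self i
    have hne : b i ≠ b' i := (Finset.mem_filter.mp hmem).2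
    have huniq : ∀ j, b j ≠ b' j → j = i := by
      intro j hj
      have : j ∈ Finset.univ.filter fun j => b j ≠ b' j :=
        Finset.mem_filter.mpr ⟨Finset.mem_univ _, hj⟩
      rw [hi] at this
      exact Finset.mem_singleton.mp this
    have hin : 2 * (i : ℕ) + 1 < 2 * n := by have := i.isLt; omega
    left
    refine ⟨2 * (i : ℕ), 2 * (i : ℕ) + 1, by omega, hin, ?_, ?_, ?_⟩
    · intro r hr1 hr2
      have hrv : (r : ℕ) = 2 * (i : ℕ) := by omega
      have hbd : b ⟨(r : ℕ) / 2, by omega⟩ ≠ b' ⟨(r : ℕ) / 2, by omega⟩ := by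
        have hidx : (⟨(r : ℕ) / 2, by omega⟩ : Fin n) = i :=
          Fin.ext (show (r : ℕ) / 2 = (i : ℕ) by omega)
        rw [hidx]
        exact hne
      exact swapL b b' r (by omega) (by omega) hbd
    · have hbd : b ⟨(2 * (i : ℕ)) / 2, by omega⟩ ≠ b' ⟨(2 * (i : ℕ)) / 2, by omega⟩ := by
        have hidx : (⟨(2 * (i : ℕ)) / 2, by omega⟩ : Fin n) = i :=
          Fin.ext (show (2 * (i : ℕ)) / 2 = (i : ℕ) by omega)
        rw [hidx]
        exact hne
      exact swapR b b' (2 * (i : ℕ)) hin (by omega) hbd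
    · intro r hr
      rw [pairPerm_eq_iff]
      by_contra hc
      have := huniq ⟨(r : ℕ) / 2, by omega⟩ hc
      have hv : (r : ℕ) / 2 = (i : ℕ) := congrArg Fin.val this
      omega
end

section
/- For a binary string b = b_2 b_3 ... b_n (indexed from 2 to n), define the sequence f(b) of length n recursively: start with the one-element sequence (1), and for i = 2, ..., n in increasing order, insert the value i at the leftmost position of the current sequence if b_i = 1, and at the rightmost position if b_i = 0. Then for all binary strings b, b' (indexed from 2 to n), the permutations f(b) and f(b') differ by a jump if and only if the Hamming distance between b and b' equals 1. -/
/-- The sequence obtained from the binary string `b` (whose relevant bits are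
`b_2, ..., b_n`) by starting from the one-element sequence `[1]` and, for
`i = 2, ..., n` in increasing order, inserting the value `i` at the leftmost position
if `b_i = 1` and at the rightmost position if `b_i = 0`. -/
def insertPerm (b : ℕ → Bool) : ℕ → List ℕ
  | 0 => []
  | 1 => [1]
  | n + 2 =>
    if b (n + 2) = true then (n + 2) :: insertPerm b (n + 1)
    else insertPerm b (n + 1) ++ [n + 2]

/-- `l'` is obtained from `l` by a right-jump: for some positions `i < j` (0-indexed), the
entry at position `i` is larger than every entry at positions `i+1, ..., j`, and the
segment `l_i l_{i+1} ... l_j` is replaced by `l_{i+1} ... l_j l_i`, all other positions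
being unchanged. -/
def RightJump (l l' : List ℕ) : Prop :=
  l'.length = l.length ∧
  ∃ i j : ℕ, i < j ∧ j < l.length ∧
    (∀ t : ℕ, i < t → t ≤ j → l.getD t 0 < l.getD i 0) ∧
    (∀ r : ℕ, i ≤ r → r < j → l'.getD r 0 = l.getD (r + 1) 0) ∧
    l'.getD j 0 = l.getD i 0 ∧
    (∀ r : ℕ, r < l.length → (r < i ∨ j < r) → l'.getD r 0 = l.getD r 0)

/-- Two sequences differ by a jump if one is obtained from the other by a single
right-jump (equivalently, the other is obtained by a left-jump). -/
def DiffByJump (l l' : List ℕ) : Prop := RightJump l l' ∨ RightJump l' l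

/-! The value `n` is the largest entry of `f(b)`; it stands at the front if `b_n = 1` and at the
back otherwise, and deleting it leaves `f(b)` for the shorter string. A right-jump between two
such lists either keeps `n` in place, and is then a right-jump of the shorter lists, or moves `n`
from the front to the back, which is only possible by rotating the whole list, so that the shorter
lists agree. It cannot move `n` from the back to the front, since a right-jump never increases the
first entry. By induction, `f(b')` arises from `f(b)` by a right-jump exactly when `b` and `b'`
differ in a single bit `k`, and `b_k = 1`. -/

theorem List.getD_mem {α : Type*} {l : List α} {n : ℕ} (d : α) (h : n < l.length) :
    l.getD n d ∈ l := by
  rw [List.getD_eq_getElem _ _ h]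
  exact List.getElem_mem h

theorem List.cons_ne_append_singleton {α : Type*} {L L' : List α} {x : α} (hL : L ≠ [])
    (hx : x ∉ L') : x :: L ≠ L' ++ [x] := by
  rw [Ne, List.cons_eq_append_iff]
  grind

section RightJump

variable {l l' L L' : List ℕ} {x : ℕ}

theorem RightJump.one_lt_length (h : RightJump l l') : 1 < l.length := by
  obtain ⟨-, i, j, hij, hj, -⟩ := h
  omega

theorem RightJump.getD_zero_le (h : RightJump l l') : l'.getD 0 0 ≤ l.getD 0 0 := by
  obtain ⟨-, i, j, hij, hj, hbig, hmid, -, hout⟩ := h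
  rcases Nat.eq_zero_or_pos i with rfl | hi
  · exact (hmid 0 le_rfl hij).trans_le (hbig 1 one_pos hij).le
  · exact (hout 0 (by omega) (.inl hi)).le

theorem rightJump_cons_iff (hx : x ∉ L') : RightJump (x :: L) (x :: L') ↔ RightJump L L' := by
  constructor
  · rintro ⟨hlen, i, j, hij, hj, hbig, hmid, hjv, hout⟩
    simp only [List.length_cons, Nat.add_right_cancel_iff] at hlen hj
    -- a jump starting at the head would carry `x` into `L'`
    obtain _ | i := i
    · obtain _ | j := j
      · omega
      · exact absurd (List.getD_mem 0 (show j < L'.length by omega)) (by grind)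
    obtain _ | j := j
    · omega
    refine ⟨hlen, i, j, by omega, by omega, ?_, ?_, by simpa using hjv, ?_⟩ <;> intros <;> grind
  · rintro ⟨hlen, i, j, hij, hj, hbig, hmid, hjv, hout⟩
    refine ⟨by simp [hlen], i + 1, j + 1, by omega, by simpa, ?_, ?_, by simpa, ?_⟩ <;>
      rintro (_ | r) <;> grind

theorem rightJump_append_singleton_iff (hx : x ∉ L) :
    RightJump (L ++ [x]) (L' ++ [x]) ↔ RightJump L L' := by
  constructor
  · rintro ⟨hlen, i, j, hij, hj, hbig, hmid, hjv, hout⟩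
    simp only [List.length_append, List.length_singleton, Nat.add_right_cancel_iff] at hlen hj
    -- a jump ending at the last position would have to carry `x` out of `L`
    have hjL : j < L.length := by
      refine lt_of_le_of_ne (by omega) fun hjL => hx ?_
      have := List.getD_mem 0 (show i < L.length by omega)
      grind
    refine ⟨hlen, i, j, hij, hjL, ?_, ?_, ?_, ?_⟩ <;> grind
  · rintro ⟨hlen, i, j, hij, hj, hbig, hmid, hjv, hout⟩
    refine ⟨by simp [hlen], i, j, hij, by simp; omega, ?_, ?_, ?_, ?_⟩ <;> grind

theorem rightJump_cons_append_singleton_iff (hL : L ≠ []) (hlt : ∀ y ∈ L, y < x) :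
    RightJump (x :: L) (L' ++ [x]) ↔ L' = L := by
  constructor
  · rintro ⟨hlen, i, j, hij, hj, hbig, hmid, hjv, hout⟩
    simp only [List.length_cons, List.length_append, List.length_nil] at hlen hj
    replace hlen : L'.length = L.length := by omega
    -- the jump must end where `x` lands and start where `x` is: it rotates the whole list
    obtain rfl : j = L.length := by
      refine le_antisymm (by omega) (not_lt.1 fun hjL => ?_)
      have := hlt _ (List.getD_mem 0 (show L.length - 1 < L.length by omega))
      have := hout L.length (by simp) (.inr hjL)
      grind
    obtain rfl : i = 0 := by
      obtain _ | i := i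
      · rfl
      · have := hlt _ (List.getD_mem 0 (show i < L.length by omega))
        grind
    refine List.ext_getElem hlen fun r h1 h2 => ?_
    have := hmid r (by omega) (by omega)
    grind
  · intro h
    rw [h]
    refine ⟨by simp, 0, L.length, List.length_pos_iff.2 hL, by simp, ?_, ?_, ?_, ?_⟩
    · rintro (_ | t) ht htj
      · omega
      · have := hlt _ (List.getD_mem 0 (show t < L.length by omega))
        grind
    all_goals grind

theorem not_rightJump_append_singleton_cons (hlt : ∀ y ∈ L, y < x) :
    ¬ RightJump (L ++ [x]) (x :: L') := by
  intro h
  have hL : 0 < L.length := by simpa using h.one_lt_length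
  have := hlt _ (List.getD_mem 0 hL)
  have := h.getD_zero_le
  grind

end RightJump

section insertPerm

variable (b b' : ℕ → Bool)

theorem length_insertPerm : ∀ n, (insertPerm b n).length = n
  | 0 | 1 => rfl
  | n + 2 => by
    unfold insertPerm
    split <;> simp [length_insertPerm (n + 1)]

variable {b} in
theorem lt_of_mem_insertPerm : ∀ {n y : ℕ}, y ∈ insertPerm b n → y < n + 1
  | 0, _, h => by simp [insertPerm] at h
  | 1, _, h => by simp_all [insertPerm]
  | n + 2, y, h => by
    have := @lt_of_mem_insertPerm (n + 1) y
    unfold insertPerm at h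
    split at h <;> grind

theorem insertPerm_add_one_ne_nil (n : ℕ) : insertPerm b (n + 1) ≠ [] := by
  simp [← List.length_pos_iff, length_insertPerm]

def diffIndices (n : ℕ) : Finset ℕ := (Finset.Icc 2 n).filter fun i => b i ≠ b' i

theorem diffIndices_comm (n : ℕ) : diffIndices b b' n = diffIndices b' b n := by
  simp [diffIndices, ne_comm]

variable {b b'}

theorem mem_diffIndices {n i : ℕ} :
    i ∈ diffIndices b b' n ↔ (2 ≤ i ∧ i ≤ n) ∧ b i ≠ b' i := by
  simp [diffIndices]

theorem diffIndices_eq_empty_of_le_one {n : ℕ} (hn : n ≤ 1) : diffIndices b b' n = ∅ := by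
  ext; simp [mem_diffIndices]; omega

theorem diffIndices_add_two_of_eq {n : ℕ} (h : b (n + 2) = b' (n + 2)) :
    diffIndices b b' (n + 2) = diffIndices b b' (n + 1) := by
  ext i; simp only [mem_diffIndices]; grind

theorem diffIndices_add_two_of_ne {n : ℕ} (h : b (n + 2) ≠ b' (n + 2)) :
    diffIndices b b' (n + 2) = insert (n + 2) (diffIndices b b' (n + 1)) := by
  ext i; simp only [mem_diffIndices, Finset.mem_insert]; grind

theorem insertPerm_eq_iff : ∀ n, insertPerm b n = insertPerm b' n ↔ diffIndices b b' n = ∅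
  | 0 | 1 => by simp [insertPerm, diffIndices_eq_empty_of_le_one]
  | n + 2 => by
    by_cases h : b (n + 2) = b' (n + 2)
    · rw [diffIndices_add_two_of_eq h, ← insertPerm_eq_iff (n + 1)]
      simp only [insertPerm, h]
      split <;> simp
    · have hx {c : ℕ → Bool} : n + 2 ∉ insertPerm c (n + 1) := fun hm =>
        (lt_of_mem_insertPerm hm).false
      simp only [diffIndices_add_two_of_ne h, Finset.insert_ne_empty, iff_false, insertPerm]
      cases hb : b (n + 2) <;> simp_all [List.cons_ne_append_singleton, Ne.symm,
        insertPerm_add_one_ne_nil]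

theorem diffIndices_add_two_eq_singleton_iff {n k : ℕ} (h : b (n + 2) ≠ b' (n + 2)) :
    diffIndices b b' (n + 2) = {k} ↔ k = n + 2 ∧ diffIndices b b' (n + 1) = ∅ := by
  rw [diffIndices_add_two_of_ne h, Finset.eq_singleton_iff_unique_mem,
    Finset.eq_empty_iff_forall_notMem]
  simp only [Finset.mem_insert, mem_diffIndices]
  grind

theorem rightJump_insertPerm_iff : ∀ n,
    RightJump (insertPerm b n) (insertPerm b' n) ↔ ∃ k, diffIndices b b' n = {k} ∧ b k = true
  | 0 | 1 => by
    refine iff_of_false (fun h => ?_) ?_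
    · simpa [length_insertPerm] using h.one_lt_length
    · simp [diffIndices_eq_empty_of_le_one]
  | n + 2 => by
    have hlt {c : ℕ → Bool} : ∀ y ∈ insertPerm c (n + 1), y < n + 2 :=
      fun _ => lt_of_mem_insertPerm
    have hx {c : ℕ → Bool} : n + 2 ∉ insertPerm c (n + 1) := fun hm => (hlt _ hm).false
    have ih := rightJump_insertPerm_iff (n + 1)
    cases hb : b (n + 2) <;> cases hb' : b' (n + 2)
    · rw [diffIndices_add_two_of_eq (hb.trans hb'.symm)]
      simpa [insertPerm, hb, hb', rightJump_append_singleton_iff hx] using ih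
    · simp [insertPerm, hb, hb', not_rightJump_append_singleton_cons hlt,
        diffIndices_add_two_eq_singleton_iff]
    · simp [insertPerm, hb, hb', diffIndices_add_two_eq_singleton_iff, insertPerm_eq_iff,
        rightJump_cons_append_singleton_iff (insertPerm_add_one_ne_nil b n) hlt,
        diffIndices_comm b' b]
    · rw [diffIndices_add_two_of_eq (hb.trans hb'.symm)]
      simpa [insertPerm, hb, hb', rightJump_cons_iff hx] using ih

end insertPerm

/-- For binary strings `b, b'` with bits indexed from 2 to `n`, the
permutations `f(b)` and `f(b')` differ by a jump iff the Hamming distance between `b`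
and `b'` (over the index range `2, ..., n`) equals 1. -/
theorem insertPerm_jump_iff (n : ℕ) (b b' : ℕ → Bool) :
    DiffByJump (insertPerm b n) (insertPerm b' n) ↔
      ((Finset.Icc 2 n).filter fun i => b i ≠ b' i).card = 1 := by
  change _ ↔ (diffIndices b b' n).card = 1
  rw [DiffByJump, rightJump_insertPerm_iff, rightJump_insertPerm_iff, diffIndices_comm b',
    Finset.card_eq_one]
  constructor
  · rintro (⟨k, hk, -⟩ | ⟨k, hk, -⟩) <;> exact ⟨k, hk⟩
  · rintro ⟨k, hk⟩
    have hne : b k ≠ b' k := (mem_diffIndices.1 (hk ▸ Finset.mem_singleton_self k)).2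
    cases hbk : b k
    · exact .inr ⟨k, hk, by simpa [hbk] using hne.symm⟩
    · exact .inl ⟨k, hk, hbk⟩
end
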